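/- With constant meeting rates and vanishing frictions, the firm size distribution converges to the preference distribution: let ℓ : [0,1] → ℝ be continuous on the circle (ℓ(0) = ℓ(1)). Then for every y ∈ [0,1], ∫₀¹ r(r+1)·ℓ(x)/(r + 2·d(x,y))² dx → ℓ(y) as r → 0⁺, where d(x,y) = min_{k∈ℤ} |x − y + k|. -/

import Mathlib

open MeasureTheory

/-- Distance on the circle of circumference 1: `d(x,y) = min_{k ∈ ℤ} |x - y + k|`. -/
noncomputable def circleDist (x y : ℝ) : ℝ :=
  sInf {v : ℝ | ∃ k : ℤ, v = |x - y + (k : ℝ)|}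

/-!
Identify `[0, 1]` with the circle `AddCircle 1`: there `circleDist x y = ‖x - y‖`, and the
periodic continuous `ℓ` lifts to a continuous function. The kernels `z ↦ K_r ‖z - y‖` are
nonnegative, have total mass `2 ∫₀^{1/2} K_r = 1` for every `r > 0`, and tend to `0` uniformly
away from `y` as `r → 0⁺`. They are therefore peak functions at `y`, and the peak-function
theorem gives `∫ K_r ‖z - y‖ ℓ z → ℓ y`.
-/

open Filter Set Topology

lemma circleDist_eq_norm (x y : ℝ) :
    circleDist x y = ‖((x - y : ℝ) : AddCircle (1 : ℝ))‖ := by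
  rw [AddCircle.norm_eq, inv_one, one_mul, mul_one]
  refine IsLeast.csInf_eq ⟨⟨-round (x - y), by push_cast; ring_nf⟩, ?_⟩
  rintro v ⟨k, rfl⟩
  simpa using round_le (x - y) (-k)

noncomputable def frictionKernel (r t : ℝ) : ℝ := r * (r + 1) / (r + 2 * t) ^ 2

section frictionKernel

variable {r s t : ℝ}

lemma frictionKernel_nonneg (hr : 0 ≤ r) : 0 ≤ frictionKernel r t := by
  unfold frictionKernel; positivity

lemma frictionKernel_le_of_le (hr : 0 < r) (hs : 0 ≤ s) (hst : s ≤ t) :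
    frictionKernel r t ≤ frictionKernel r s :=
  div_le_div_of_nonneg_left (by positivity) (by positivity) (by gcongr)

lemma continuousOn_frictionKernel (hr : 0 < r) : ContinuousOn (frictionKernel r) (Ici 0) :=
  continuousOn_const.div (by fun_prop) fun t (ht : 0 ≤ t) => by positivity

lemma tendsto_frictionKernel_zero (ht : t ≠ 0) :
    Tendsto (fun r => frictionKernel r t) (𝓝 0) (𝓝 0) := by
  have : ContinuousAt (fun r : ℝ => r * (r + 1) / (r + 2 * t) ^ 2) 0 :=
    ContinuousAt.div (by fun_prop) (by fun_prop) (by simpa using ht)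
  simpa [frictionKernel] using this.tendsto

lemma integral_frictionKernel (hr : 0 < r) (ht : 0 ≤ t) :
    ∫ s in 0..t, frictionKernel r s = t * (r + 1) / (r + 2 * t) := by
  have hderiv : ∀ s ∈ uIcc 0 t,
      HasDerivAt (fun s => -(r * (r + 1) / 2) / (r + 2 * s)) (frictionKernel r s) s := by
    intro s hs
    rw [uIcc_of_le ht] at hs
    have hpos : r + 2 * s ≠ 0 := by linarith [hs.1]
    refine ((hasDerivAt_const s _).div (((hasDerivAt_id' s).const_mul 2).const_add r) hpos
      ).congr_deriv ?_
    unfold frictionKernel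
    field_simp
    ring
  have hint : IntervalIntegrable (frictionKernel r) volume 0 t :=
    (continuousOn_frictionKernel hr |>.mono <| by simp [uIcc_of_le ht, Icc_subset_Ici_self])
      |>.intervalIntegrable
  rw [intervalIntegral.integral_eq_sub_of_hasDerivAt hderiv hint]
  field_simp
  ring

end frictionKernel

lemma AddCircle.liftIco_zero_coe_apply_of_mem_Icc {T : ℝ} [Fact (0 < T)] {B : Type*}
    {f : ℝ → B} (hf : f 0 = f T) {x : ℝ} (hx : x ∈ Icc 0 T) : liftIco T 0 f x = f x := by
  rcases hx.2.lt_or_eq with hxT | rfl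
  · exact liftIco_zero_coe_apply ⟨hx.1, hxT⟩
  · rw [coe_period, ← hf, ← coe_zero]
    exact liftIco_zero_coe_apply (by simp [Fact.out])

lemma intervalIntegral.integral_comp_abs_eq_two_mul {f : ℝ → ℝ} {c : ℝ} (hc : 0 ≤ c)
    (hf : ContinuousOn f (Icc 0 c)) : ∫ x in -c..c, f |x| = 2 * ∫ x in 0..c, f x := by
  have hcont : ContinuousOn (fun x => f |x|) (Icc (-c) c) :=
    hf.comp continuous_abs.continuousOn fun x hx => ⟨abs_nonneg x, abs_le.2 hx⟩
  have hpos : ∫ x in 0..c, f |x| = ∫ x in 0..c, f x :=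
    integral_congr fun x hx => by rw [uIcc_of_le hc] at hx; rw [abs_of_nonneg hx.1]
  have hneg : ∫ x in -c..0, f |x| = ∫ x in 0..c, f |x| := by
    simpa using (integral_comp_neg (a := 0) (b := c) fun x => f |x|).symm
  rw [← integral_add_adjacent_intervals (b := 0)
    (hcont.mono (by simp [uIcc_of_le, hc, Icc_subset_Icc])).intervalIntegrable
    (hcont.mono (by simp [uIcc_of_le, hc, Icc_subset_Icc])).intervalIntegrable, hneg, hpos]
  exact (two_mul _).symm

lemma AddCircle.integral_comp_norm {T : ℝ} [Fact (0 < T)] {f : ℝ → ℝ}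
    (hf : ContinuousOn f (Icc 0 (T / 2))) :
    ∫ z : AddCircle T, f ‖z‖ = 2 * ∫ t in 0..T / 2, f t := by
  have hT : 0 < T := Fact.out
  rw [← AddCircle.intervalIntegral_preimage T (-(T / 2)), show -(T / 2) + T = T / 2 by ring,
    ← intervalIntegral.integral_comp_abs_eq_two_mul (by positivity) hf]
  refine intervalIntegral.integral_congr fun x hx => ?_
  rw [uIcc_of_le (by linarith)] at hx
  rw [(AddCircle.norm_coe_eq_abs_iff T hT.ne').2 (by rw [abs_of_pos hT]; exact abs_le.2 hx)]

lemma integral_frictionKernel_norm_sub {r : ℝ} (hr : 0 < r) (y : AddCircle (1 : ℝ)) :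
    ∫ z, frictionKernel r ‖z - y‖ = 1 := by
  rw [integral_sub_right_eq_self (fun z => frictionKernel r ‖z‖) y,
    AddCircle.integral_comp_norm ((continuousOn_frictionKernel hr).mono Icc_subset_Ici_self),
    integral_frictionKernel hr (by norm_num)]
  field_simp

lemma tendstoUniformlyOn_frictionKernel_norm_sub {E : Type*} [SeminormedAddCommGroup E]
    (y : E) {δ : ℝ} (hδ : 0 < δ) :
    TendstoUniformlyOn (fun r z => frictionKernel r ‖z - y‖) 0 (𝓝[>] 0) {z | δ ≤ ‖z - y‖} := by
  rw [Metric.tendstoUniformlyOn_iff]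
  intro ε hε
  filter_upwards [(tendsto_frictionKernel_zero hδ.ne').mono_left nhdsWithin_le_nhds
      |>.eventually (gt_mem_nhds hε), self_mem_nhdsWithin]
    with r hrε (hr : 0 < r) z (hz : δ ≤ _)
  rw [Pi.zero_apply, dist_zero_left, Real.norm_of_nonneg (frictionKernel_nonneg hr.le)]
  exact (frictionKernel_le_of_le hr hδ.le hz).trans_lt hrε

theorem tendsto_integral_frictionKernel_smul {E : Type*} [NormedAddCommGroup E]
    [NormedSpace ℝ E] [CompleteSpace E] {g : AddCircle (1 : ℝ) → E} (hg : Continuous g)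
    (y : AddCircle (1 : ℝ)) :
    Tendsto (fun r => ∫ z, frictionKernel r ‖z - y‖ • g z) (𝓝[>] 0) (𝓝 (g y)) := by
  refine tendsto_integral_peak_smul_of_integrable_of_tendsto MeasurableSet.univ univ_mem
    (measure_ne_top _ _) ?_ ?_ ?_ ?_ ?_ (hg.tendsto y)
  · filter_upwards [self_mem_nhdsWithin] with r (hr : 0 < r) z
    using frictionKernel_nonneg hr.le
  · intro u hu hyu
    obtain ⟨δ, hδ, hball⟩ := Metric.isOpen_iff.1 hu y hyu
    refine (tendstoUniformlyOn_frictionKernel_norm_sub y hδ).mono fun z hz => ?_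
    rw [mem_ofPred_eq, ← dist_eq_norm]
    exact not_lt.1 fun h => hz (hball h)
  · refine tendsto_const_nhds.congr' ?_
    filter_upwards [self_mem_nhdsWithin] with r hr
    rw [setIntegral_univ, integral_frictionKernel_norm_sub hr]
  · filter_upwards [self_mem_nhdsWithin] with r hr
    exact ((continuousOn_frictionKernel hr).comp_continuous (by fun_prop)
      fun z => norm_nonneg _).aestronglyMeasurable
  · exact hg.integrable_of_hasCompactSupport (HasCompactSupport.of_compactSpace g)

/-- With constant meeting rates and vanishing frictions, the firm size
distribution converges pointwise to the preference distribution. -/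
theorem vanishing_frictions_recover_preferences (ℓ : ℝ → ℝ)
    (hl_cont : ContinuousOn ℓ (Set.Icc 0 1)) (hl_per : ℓ 0 = ℓ 1) :
    ∀ y ∈ Set.Icc (0:ℝ) 1,
      Filter.Tendsto
        (fun r => ∫ x in (0:ℝ)..1,
          r * (r + 1) * ℓ x / (r + 2 * circleDist x y) ^ 2)
        (nhdsWithin 0 (Set.Ioi 0)) (nhds (ℓ y)) := by
  intro y hy
  set L := AddCircle.liftIco 1 0 ℓ
  have hL : Continuous L := AddCircle.liftIco_zero_continuous hl_per hl_cont
  have hL_coe : ∀ x ∈ Icc (0 : ℝ) 1, L x = ℓ x :=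
    fun x => AddCircle.liftIco_zero_coe_apply_of_mem_Icc hl_per
  have hintegral : ∀ r, ∫ x in (0 : ℝ)..1, r * (r + 1) * ℓ x / (r + 2 * circleDist x y) ^ 2
      = ∫ z : AddCircle (1 : ℝ), frictionKernel r ‖z - y‖ • L z := fun r => by
    rw [← AddCircle.intervalIntegral_preimage 1 0, zero_add]
    refine intervalIntegral.integral_congr fun x hx => ?_
    rw [uIcc_of_le zero_le_one] at hx
    simp only [smul_eq_mul, hL_coe x hx, circleDist_eq_norm, AddCircle.coe_sub, frictionKernel]
    ring
  simpa only [hintegral, hL_coe y hy] using tendsto_integral_frictionKernel_smul hL y
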